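/- For each fixed r₀ > 0, every point (x, y, z) on the curve θ ↦ 𝔅_m(r₀, θ) of the Bour surface of value m lies on the quadric of revolution x² + y² + (m²/(m²-1)) z² = (r₀^{m-1}/(m-1) + r₀^{m+1}/(m+1))². -/

import Mathlib

/-!
Put `a = r₀^(m-1)/(m-1)` and `b = r₀^(m+1)/(m+1)`. The angles `(m-1)θ` and `(m+1)θ` add up to
`2mθ`, so `x² + y² = a² + b² - 2ab cos 2mθ`. Since `ab (m² - 1) = r₀^(2m)`, the vertical term is
`(m²/(m²-1)) z² = 4ab cos² mθ`, and `cos 2mθ = 2cos² mθ - 1` makes the sum `(a + b)²`.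
-/

open Real

theorem Real.rpow_sub_one_mul_rpow_add_one {x : ℝ} (hx : x ≠ 0) (y : ℝ) :
    x ^ (y - 1) * x ^ (y + 1) = (x ^ y) ^ 2 := by
  rw [rpow_sub_one hx, rpow_add_one hx]
  field_simp

theorem sq_mul_cos_sub_add_sq_neg_mul_sin_sub (a b α β : ℝ) :
    (a * cos α - b * cos β) ^ 2 + (-a * sin α - b * sin β) ^ 2
      = a ^ 2 + b ^ 2 - 2 * a * b * cos (α + β) := by
  rw [cos_add]
  linear_combination a ^ 2 * sin_sq_add_cos_sq α + b ^ 2 * sin_sq_add_cos_sq β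

theorem bour_curve_on_quadric (m : ℝ) (hm : m ≠ -1 ∧ m ≠ 0 ∧ m ≠ 1)
    (r₀ : ℝ) (hr : 0 < r₀) (θ : ℝ) :
    (r₀ ^ (m - 1) * Real.cos ((m - 1) * θ) / (m - 1)
      - r₀ ^ (m + 1) * Real.cos ((m + 1) * θ) / (m + 1)) ^ 2 +
    (-(r₀ ^ (m - 1)) * Real.sin ((m - 1) * θ) / (m - 1)
      - r₀ ^ (m + 1) * Real.sin ((m + 1) * θ) / (m + 1)) ^ 2 +
    (m ^ 2 / (m ^ 2 - 1)) * (2 * r₀ ^ m * Real.cos (m * θ) / m) ^ 2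
      = (r₀ ^ (m - 1) / (m - 1) + r₀ ^ (m + 1) / (m + 1)) ^ 2 := by
  obtain ⟨hm_neg, hm_zero, hm_one⟩ := hm
  have hm_add : m + 1 ≠ 0 := by contrapose! hm_neg; linarith
  have hm_sub : m - 1 ≠ 0 := sub_ne_zero.2 hm_one
  have hm_sq : m ^ 2 - 1 ≠ 0 := by
    rw [show m ^ 2 - 1 = (m - 1) * (m + 1) by ring]
    exact mul_ne_zero hm_sub hm_add
  have hab : r₀ ^ (m - 1) / (m - 1) * (r₀ ^ (m + 1) / (m + 1)) * (m ^ 2 - 1) = (r₀ ^ m) ^ 2 := by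
    rw [← rpow_sub_one_mul_rpow_add_one hr.ne' m]
    field_simp
    ring
  set a := r₀ ^ (m - 1) / (m - 1)
  set b := r₀ ^ (m + 1) / (m + 1)
  have horizontal := sq_mul_cos_sub_add_sq_neg_mul_sin_sub a b ((m - 1) * θ) ((m + 1) * θ)
  rw [show (m - 1) * θ + (m + 1) * θ = 2 * (m * θ) by ring, cos_two_mul] at horizontal
  have vertical : m ^ 2 / (m ^ 2 - 1) * (2 * r₀ ^ m * cos (m * θ) / m) ^ 2
      = 4 * a * b * cos (m * θ) ^ 2 := by
    rw [div_pow, mul_pow, mul_pow, ← hab]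
    field_simp
    ring
  rw [vertical]
  linear_combination horizontal
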